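/- Let X̄ ∈ Sⁿ with X̄ ⪰ 0, let V ∈ ℝ^{n×k} have orthonormal columns, let η ≥ 0 and S ∈ S^k with S ⪰ 0 satisfy η·tr(X̄) + tr(S) ≤ α, and suppose S = Q_p Λ_p Q_pᵀ + Q_c Λ_c Q_cᵀ where Q_p ∈ ℝ^{k×k_p} and Q_c ∈ ℝ^{k×k_c} satisfy Q_pᵀQ_p = I, Q_cᵀQ_c = I, Q_pᵀQ_c = 0, and Λ_p, Λ_c are diagonal with nonnegative entries. Set X₊ = η·X̄ + V S Vᵀ and X̄₊ = η·X̄ + V Q_c Λ_c Q_cᵀ Vᵀ, and let V₊ ∈ ℝ^{n×k'} have orthonormal columns whose span contains every column of V Q_p. Then X₊ belongs to the spectral set X̂₊ = {η'·X̄₊ + V₊ S' V₊ᵀ : η' ≥ 0, S' ⪰ 0, η'·tr(X̄₊) + tr(S') ≤ α}; consequently, for every ν ∈ N, every ỹ ∈ ℝᵐ, and every y ∈ ℝᵐ, the model f̂₊(y) = sup over (X,ν') ∈ X̂₊ × N of ⟨C − 𝒜*y, X⟩ + ⟨b − ν', y⟩ satisfies f̂₊(y) ≥ ⟨C − 𝒜*ỹ,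 X₊⟩ + ⟨b − ν, ỹ⟩ + ⟨b − ν − 𝒜X₊, y − ỹ⟩. -/

import Mathlib

/-!
Write the kept part of the new iterate as `V Q_p Λ_p Q_pᵀ Vᵀ`. Since the columns of `V Q_p` lie in
the span of `V₊`, there is `W` with `V₊ W = V Q_p`, so this part equals `V₊ (W Λ_p Wᵀ) V₊ᵀ`; the
rest of `X₊` is exactly `X̄₊`. Hence `X₊ = 1 • X̄₊ + V₊ S' V₊ᵀ` with `S' = W Λ_p Wᵀ ⪰ 0`, and the
orthonormality of `V` and `V₊` makes the traces add up to `η tr X̄ + tr S ≤ α`.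

For the model bound, `⟨𝒜*y, X⟩ = ⟨𝒜X, y⟩` shows that the linearization of
`y ↦ ⟨C − 𝒜*y, X₊⟩ + ⟨b − ν, y⟩` at `ỹ` is the function itself, which is one of the
terms of the supremum defining `f̂₊(y)`.
-/

open Matrix
open scoped RealInnerProductSpace

noncomputable def Aop {n m : ℕ} (A : Fin m → Matrix (Fin n) (Fin n) ℝ)
    (X : Matrix (Fin n) (Fin n) ℝ) : EuclideanSpace ℝ (Fin m) :=
  WithLp.toLp 2 (fun i => (A i * X).trace)

noncomputable def Aadj {n m : ℕ} (A : Fin m → Matrix (Fin n) (Fin n) ℝ)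
    (y : EuclideanSpace ℝ (Fin m)) : Matrix (Fin n) (Fin n) ℝ :=
  ∑ i, y i • A i

def Nset {m : ℕ} (I : Finset (Fin m)) : Set (EuclideanSpace ℝ (Fin m)) :=
  {ν | (∀ i ∈ I, 0 ≤ ν i) ∧ ∀ i ∉ I, ν i = 0}

def SpecSet {n k : ℕ} (α : ℝ) (Xb : Matrix (Fin n) (Fin n) ℝ)
    (V : Matrix (Fin n) (Fin k) ℝ) : Set (Matrix (Fin n) (Fin n) ℝ) :=
  {X | ∃ η : ℝ, ∃ S : Matrix (Fin k) (Fin k) ℝ,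
      0 ≤ η ∧ S.PosSemidef ∧ η * Xb.trace + S.trace ≤ α ∧ X = η • Xb + V * S * Vᵀ}

noncomputable def modelF {n m k : ℕ} (C : Matrix (Fin n) (Fin n) ℝ)
    (A : Fin m → Matrix (Fin n) (Fin n) ℝ) (b : EuclideanSpace ℝ (Fin m))
    (I : Finset (Fin m)) (α : ℝ) (Xb : Matrix (Fin n) (Fin n) ℝ)
    (V : Matrix (Fin n) (Fin k) ℝ) (y : EuclideanSpace ℝ (Fin m)) : EReal :=
  sSup {r : EReal | ∃ X ∈ SpecSet α Xb V, ∃ ν ∈ Nset I,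
    r = ((((C - Aadj A y) * X).trace + ⟪b - ν, y⟫ : ℝ) : EReal)}

namespace Matrix

variable {m n p R : Type*}

theorem trace_mul_mul_transpose_of_transpose_mul_self [Fintype m] [Fintype n] [DecidableEq n]
    [CommSemiring R] {U : Matrix m n R} (hU : Uᵀ * U = 1) (M : Matrix n n R) :
    (U * M * Uᵀ).trace = M.trace := by
  rw [trace_mul_cycle, hU, Matrix.one_mul]

theorem exists_mul_eq_of_forall_exists_mulVec_eq [Fintype n] [CommSemiring R] {U : Matrix m n R}
    {B : Matrix m p R} (hB : ∀ j, ∃ w : n → R, U *ᵥ w = fun i => B i j) :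
    ∃ W : Matrix n p R, U * W = B := by
  choose w hw using hB
  refine ⟨(Matrix.of w)ᵀ, ?_⟩
  ext i j
  simpa [mul_apply, mulVec, dotProduct] using congrFun (hw j) i

end Matrix

theorem mem_SpecSet_of_mul_eq {n k k' kp : ℕ} {α η : ℝ} {Xb : Matrix (Fin n) (Fin n) ℝ}
    {V : Matrix (Fin n) (Fin k) ℝ} {Vplus : Matrix (Fin n) (Fin k') ℝ}
    {Qp : Matrix (Fin k) (Fin kp) ℝ} {P : Matrix (Fin kp) (Fin kp) ℝ}
    {W : Matrix (Fin k') (Fin kp) ℝ} (Sc : Matrix (Fin k) (Fin k) ℝ)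
    (hV : Vᵀ * V = 1) (hVplus : Vplusᵀ * Vplus = 1) (hP : P.PosSemidef)
    (hW : Vplus * W = V * Qp) (htr : η * Xb.trace + (Qp * P * Qpᵀ + Sc).trace ≤ α) :
    η • Xb + V * (Qp * P * Qpᵀ + Sc) * Vᵀ ∈ SpecSet α (η • Xb + V * Sc * Vᵀ) Vplus := by
  have hconj : Vplus * (W * P * Wᵀ) * Vplusᵀ = V * (Qp * P * Qpᵀ) * Vᵀ := by
    calc Vplus * (W * P * Wᵀ) * Vplusᵀ = (Vplus * W) * P * (Vplus * W)ᵀ := by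
          simp only [transpose_mul, Matrix.mul_assoc]
      _ = V * (Qp * P * Qpᵀ) * Vᵀ := by
          simp only [hW, transpose_mul, Matrix.mul_assoc]
  have htrace : (W * P * Wᵀ).trace = (Qp * P * Qpᵀ).trace := by
    rw [← trace_mul_mul_transpose_of_transpose_mul_self hVplus, hconj,
      trace_mul_mul_transpose_of_transpose_mul_self hV]
  refine ⟨1, W * P * Wᵀ, zero_le_one, ?_, ?_, ?_⟩
  · simpa [conjTranspose_eq_transpose_of_trivial] using hP.mul_mul_conjTranspose_same W
  · rw [one_mul, htrace, trace_add, trace_smul, smul_eq_mul,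
      trace_mul_mul_transpose_of_transpose_mul_self hV]
    rw [trace_add] at htr
    linarith
  · rw [one_smul, hconj, Matrix.mul_add, Matrix.add_mul]
    abel

theorem trace_Aadj_mul {n m : ℕ} (A : Fin m → Matrix (Fin n) (Fin n) ℝ)
    (y : EuclideanSpace ℝ (Fin m)) (X : Matrix (Fin n) (Fin n) ℝ) :
    (Aadj A y * X).trace = ⟪Aop A X, y⟫ := by
  simp [Aadj, Aop, Finset.sum_mul, trace_sum, PiLp.inner_apply, mul_comm]

theorem lagrangian_add_inner_sub {n m : ℕ} (C : Matrix (Fin n) (Fin n) ℝ)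
    (A : Fin m → Matrix (Fin n) (Fin n) ℝ) (b ν : EuclideanSpace ℝ (Fin m))
    (X : Matrix (Fin n) (Fin n) ℝ) (ytilde y : EuclideanSpace ℝ (Fin m)) :
    ((C - Aadj A ytilde) * X).trace + ⟪b - ν, ytilde⟫ + ⟪b - ν - Aop A X, y - ytilde⟫
      = ((C - Aadj A y) * X).trace + ⟪b - ν, y⟫ := by
  simp only [Matrix.sub_mul, trace_sub, trace_Aadj_mul, inner_sub_left, inner_sub_right]
  ring

theorem le_modelF {n m k : ℕ} {C : Matrix (Fin n) (Fin n) ℝ}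
    {A : Fin m → Matrix (Fin n) (Fin n) ℝ} {b : EuclideanSpace ℝ (Fin m)} {I : Finset (Fin m)}
    {α : ℝ} {Xb X : Matrix (Fin n) (Fin n) ℝ} {V : Matrix (Fin n) (Fin k) ℝ}
    {ν : EuclideanSpace ℝ (Fin m)} (hX : X ∈ SpecSet α Xb V) (hν : ν ∈ Nset I)
    (y : EuclideanSpace ℝ (Fin m)) :
    ((((C - Aadj A y) * X).trace + ⟪b - ν, y⟫ : ℝ) : EReal) ≤ modelF C A b I α Xb V y :=
  le_sSup ⟨X, hX, ν, hν, rfl⟩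

theorem stmt10_general {n m k k' kp kc : ℕ}
    (C : Matrix (Fin n) (Fin n) ℝ) (A : Fin m → Matrix (Fin n) (Fin n) ℝ)
    (b : EuclideanSpace ℝ (Fin m)) (I : Finset (Fin m)) (α : ℝ)
    (Xb : Matrix (Fin n) (Fin n) ℝ)
    (V : Matrix (Fin n) (Fin k) ℝ) (hV : Vᵀ * V = 1)
    (η : ℝ)
    (S : Matrix (Fin k) (Fin k) ℝ)
    (htr : η * Xb.trace + S.trace ≤ α)
    (Qp : Matrix (Fin k) (Fin kp) ℝ) (Qc : Matrix (Fin k) (Fin kc) ℝ)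
    (dp : Fin kp → ℝ) (dc : Fin kc → ℝ)
    (hdp : ∀ i, 0 ≤ dp i)
    (hSdec : S = Qp * diagonal dp * Qpᵀ + Qc * diagonal dc * Qcᵀ)
    (Xplus Xbplus : Matrix (Fin n) (Fin n) ℝ)
    (hXplus : Xplus = η • Xb + V * S * Vᵀ)
    (hXbplus : Xbplus = η • Xb + V * (Qc * diagonal dc * Qcᵀ) * Vᵀ)
    (Vplus : Matrix (Fin n) (Fin k') ℝ) (hVplus : Vplusᵀ * Vplus = 1)
    (hspan : ∀ j : Fin kp, ∃ w : Fin k' → ℝ, Vplus.mulVec w = fun i => (V * Qp) i j) :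
    Xplus ∈ SpecSet α Xbplus Vplus ∧
    ∀ ν ∈ Nset I, ∀ ytilde y : EuclideanSpace ℝ (Fin m),
      ((((C - Aadj A ytilde) * Xplus).trace + ⟪b - ν, ytilde⟫
          + ⟪b - ν - Aop A Xplus, y - ytilde⟫ : ℝ) : EReal)
        ≤ modelF C A b I α Xbplus Vplus y := by
  obtain ⟨W, hW⟩ := exists_mul_eq_of_forall_exists_mulVec_eq hspan
  have hmem : Xplus ∈ SpecSet α Xbplus Vplus := by
    subst hXplus hXbplus hSdec
    exact mem_SpecSet_of_mul_eq _ hV hVplus (posSemidef_diagonal_iff.mpr hdp) hW htr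
  refine ⟨hmem, fun ν hν ytilde y => ?_⟩
  rw [lagrangian_add_inner_sub]
  exact le_modelF hmem hν y

/-- the updated spectral set still contains `X₊`, and the updated model
satisfies the model-subgradient lower bound. -/
theorem stmt10 {n m k k' kp kc : ℕ} (hn : 0 < n) (hm : 0 < m) (hk : 0 < k) (hk' : 0 < k')
    (C : Matrix (Fin n) (Fin n) ℝ) (A : Fin m → Matrix (Fin n) (Fin n) ℝ)
    (b : EuclideanSpace ℝ (Fin m)) (I : Finset (Fin m)) (α : ℝ) (hα : 0 < α)
    (Xb : Matrix (Fin n) (Fin n) ℝ) (hXb : Xb.PosSemidef)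
    (V : Matrix (Fin n) (Fin k) ℝ) (hV : Vᵀ * V = 1)
    (η : ℝ) (hη : 0 ≤ η)
    (S : Matrix (Fin k) (Fin k) ℝ) (hS : S.PosSemidef)
    (htr : η * Xb.trace + S.trace ≤ α)
    (Qp : Matrix (Fin k) (Fin kp) ℝ) (Qc : Matrix (Fin k) (Fin kc) ℝ)
    (dp : Fin kp → ℝ) (dc : Fin kc → ℝ)
    (hdp : ∀ i, 0 ≤ dp i) (hdc : ∀ i, 0 ≤ dc i)
    (hQp : Qpᵀ * Qp = 1) (hQc : Qcᵀ * Qc = 1) (hQpc : Qpᵀ * Qc = 0)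
    (hSdec : S = Qp * diagonal dp * Qpᵀ + Qc * diagonal dc * Qcᵀ)
    (Xplus Xbplus : Matrix (Fin n) (Fin n) ℝ)
    (hXplus : Xplus = η • Xb + V * S * Vᵀ)
    (hXbplus : Xbplus = η • Xb + V * (Qc * diagonal dc * Qcᵀ) * Vᵀ)
    (Vplus : Matrix (Fin n) (Fin k') ℝ) (hVplus : Vplusᵀ * Vplus = 1)
    (hspan : ∀ j : Fin kp, ∃ w : Fin k' → ℝ, Vplus.mulVec w = fun i => (V * Qp) i j) :
    Xplus ∈ SpecSet α Xbplus Vplus ∧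
    ∀ ν ∈ Nset I, ∀ ytilde y : EuclideanSpace ℝ (Fin m),
      ((((C - Aadj A ytilde) * Xplus).trace + ⟪b - ν, ytilde⟫
          + ⟪b - ν - Aop A Xplus, y - ytilde⟫ : ℝ) : EReal)
        ≤ modelF C A b I α Xbplus Vplus y :=
  stmt10_general C A b I α Xb V hV η S htr Qp Qc dp dc hdp hSdec Xplus Xbplus hXplus hXbplus Vplus
    hVplus hspan
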